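/- Let t and t' be finite directed trees, each with at least two vertices, with designated roots ρ and ρ' of degree one, and in which no vertex has indegree and outdegree both equal to one. Let T be the multidigraph obtained by identifying ρ with ρ', and let π be a solid partition of the vertex set of T such that the quotient T^π is an oriented cactus, with induced bijection f_π from the vertices of t to the vertices of t' (sending ρ to ρ'). Then f_π reverses adjacency: for vertices v, w of t, there is an edge directed from v to w in t if and only if there is an edge directed from f_π(w) to f_π(v) in t'. In particular, f_π is an anti-isomorphism of rooted directed trees. -/

import Mathlib

set_option autoImplicit false

/-! ## Multigraphs -/

/-- A multigraph: a vertex type `V`, an edge type `E`, and an assignment to each edge of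
its unordered pair of endpoints.  Loops and parallel edges are allowed. -/
structure Multigraph (V E : Type) where
  ends : E → Sym2 V

namespace Multigraph

variable {V E : Type}

/-- `G.ReachAvoid F u v` : `v` can be reached from `u` by a walk using no edge of `F`. -/
inductive ReachAvoid (G : Multigraph V E) (F : Set E) : V → V → Prop
  | refl (v : V) : ReachAvoid G F v v
  | tail {u v w : V} (e : E) (he : e ∉ F) (hvw : G.ends e = s(v, w))
      (h : ReachAvoid G F u v) : ReachAvoid G F u w

/-- A multigraph is connected if any two vertices are joined by a walk. -/
def Connected (G : Multigraph V E) : Prop := ∀ u v : V, G.ReachAvoid ∅ u v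

/-- `F` is a set of edges whose deletion disconnects `v` from `w`. -/
def IsEdgeCut (G : Multigraph V E) (v w : V) (F : Set E) : Prop := ¬ G.ReachAvoid F v w

/-- Edge connectivity `λ(v, w)`: the minimum number of edges whose deletion
disconnects `v` from `w`. -/
noncomputable def edgeConn (G : Multigraph V E) (v w : V) : ℕ :=
  sInf {k : ℕ | ∃ F : Finset E, F.card = k ∧ G.IsEdgeCut v w ↑F}

/-- Walks in a multigraph, recorded together with the edges they traverse. -/
inductive Walk (G : Multigraph V E) : V → V → Type
  | nil (v : V) : Walk G v v
  | cons {u v w : V} (e : E) (huv : G.ends e = s(u, v)) (p : Walk G v w) : Walk G u w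

namespace Walk

variable {G : Multigraph V E}

/-- The list of edges traversed by a walk. -/
def edges : ∀ {u v : V}, G.Walk u v → List E
  | _, _, .nil _ => []
  | _, _, .cons e _ p => e :: edges p

/-- The list of vertices visited by a walk (including both endpoints). -/
def verts : ∀ {u v : V}, G.Walk u v → List V
  | _, v, .nil _ => [v]
  | u, _, .cons _ _ p => u :: verts p

/-- A walk is a path if it visits no vertex twice. -/
def IsPath {u v : V} (p : G.Walk u v) : Prop := p.verts.Nodup

end Walk

/-- `S` is the edge set of a simple cycle of `G`: a nonempty closed walk with no repeated
edges and no repeated vertices (other than the final return to the starting point).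
A loop is a simple cycle of length one. -/
def IsSimpleCycleOn [DecidableEq E] (G : Multigraph V E) (S : Finset E) : Prop :=
  ∃ (v : V) (p : G.Walk v v),
    p.edges ≠ [] ∧ p.edges.Nodup ∧ p.verts.dropLast.Nodup ∧ p.edges.toFinset = S

/-- A cactus: a connected multigraph in which every edge lies on exactly one simple cycle
(simple cycles being identified with their edge sets). -/
def IsCactus [DecidableEq E] (G : Multigraph V E) : Prop :=
  G.Connected ∧ ∀ e : E, ∃! S : Finset E, G.IsSimpleCycleOn S ∧ e ∈ S

/-- Two-edge-connected: connected, and still connected after deleting any single edge. -/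
def TwoEdgeConnected (G : Multigraph V E) : Prop :=
  G.Connected ∧ ∀ (e : E) (u v : V), G.ReachAvoid {e} u v

/-- The quotient multigraph by a partition (setoid) of the vertices: the vertices are the
blocks, and each edge joins the blocks of its original endpoints. -/
def quot (G : Multigraph V E) (σ : Setoid V) : Multigraph (Quotient σ) E :=
  ⟨fun e => (G.ends e).map (Quotient.mk σ)⟩

/-- Degree of a vertex: the number of edge-incidences at it (loops count twice). -/
def degree [DecidableEq V] [Fintype E] (G : Multigraph V E) (v : V) : ℕ :=
  ∑ e : E,
    Sym2.lift
      ⟨fun a b => (if a = v then 1 else 0) + (if b = v then 1 else 0),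
        fun _ _ => add_comm _ _⟩ (G.ends e)

/-- A leaf is a vertex of degree one. -/
def IsLeaf [DecidableEq V] [Fintype E] (G : Multigraph V E) (v : V) : Prop :=
  G.degree v = 1

/-- A tree: a connected multigraph with no simple cycles. -/
def IsTree [DecidableEq E] (G : Multigraph V E) : Prop :=
  G.Connected ∧ ∀ S : Finset E, ¬ G.IsSimpleCycleOn S

end Multigraph

/-- An embedding of the multigraph `H` into `G`, realizing `H` as a subgraph of `G`. -/
structure Multigraph.Embedding {W F V E : Type} (H : Multigraph W F) (G : Multigraph V E) where
  vmap : W → V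
  emap : F → E
  vmap_inj : Function.Injective vmap
  emap_inj : Function.Injective emap
  ends_map : ∀ f : F, G.ends (emap f) = (H.ends f).map vmap

/-! ## Multidigraphs -/

/-- A multidigraph: vertex type `V`, edge type `E`, and source and target maps. -/
structure Multidigraph (V E : Type) where
  src : E → V
  tgt : E → V

namespace Multidigraph

variable {V E : Type}

/-- The underlying multigraph of a multidigraph. -/
def toMultigraph (D : Multidigraph V E) : Multigraph V E :=
  ⟨fun e => s(D.src e, D.tgt e)⟩

/-- Directed walks in a multidigraph. -/
inductive DiWalk (D : Multidigraph V E) : V → V → Type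
  | nil (v : V) : DiWalk D v v
  | cons {u v w : V} (e : E) (hs : D.src e = u) (ht : D.tgt e = v)
      (p : DiWalk D v w) : DiWalk D u w

namespace DiWalk

variable {D : Multidigraph V E}

/-- The list of edges traversed by a directed walk. -/
def edges : ∀ {u v : V}, D.DiWalk u v → List E
  | _, _, .nil _ => []
  | _, _, .cons e _ _ p => e :: edges p

/-- The list of vertices visited by a directed walk. -/
def verts : ∀ {u v : V}, D.DiWalk u v → List V
  | _, v, .nil _ => [v]
  | u, _, .cons _ _ _ p => u :: verts p

end DiWalk

/-- `S` is the edge set of a simple directed cycle of `D`. -/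
def IsDiCycleOn [DecidableEq E] (D : Multidigraph V E) (S : Finset E) : Prop :=
  ∃ (v : V) (p : D.DiWalk v v),
    p.edges ≠ [] ∧ p.edges.Nodup ∧ p.verts.dropLast.Nodup ∧ p.edges.toFinset = S

/-- An oriented cactus: the underlying multigraph is a cactus and each of its simple
cycles (pads) is a directed cycle. -/
def IsOrientedCactus [DecidableEq E] (D : Multidigraph V E) : Prop :=
  D.toMultigraph.IsCactus ∧
    ∀ S : Finset E, D.toMultigraph.IsSimpleCycleOn S → D.IsDiCycleOn S

/-- The quotient multidigraph by a partition (setoid) of the vertices. -/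
def quot (D : Multidigraph V E) (σ : Setoid V) : Multidigraph (Quotient σ) E where
  src := fun e => Quotient.mk σ (D.src e)
  tgt := fun e => Quotient.mk σ (D.tgt e)

/-- Indegree of a vertex: the number of edges with target `v`. -/
def indeg [DecidableEq V] [Fintype E] (D : Multidigraph V E) (v : V) : ℕ :=
  (Finset.univ.filter fun e => D.tgt e = v).card

/-- Outdegree of a vertex: the number of edges with source `v`. -/
def outdeg [DecidableEq V] [Fintype E] (D : Multidigraph V E) (v : V) : ℕ :=
  (Finset.univ.filter fun e => D.src e = v).card

end Multidigraph

/-- An embedding of the multidigraph `H` into `G`, realizing `H` as a subgraph of `G`. -/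
structure Multidigraph.Embedding {W F V E : Type}
    (H : Multidigraph W F) (G : Multidigraph V E) where
  vmap : W → V
  emap : F → E
  vmap_inj : Function.Injective vmap
  emap_inj : Function.Injective emap
  src_map : ∀ f : F, G.src (emap f) = vmap (H.src f)
  tgt_map : ∀ f : F, G.tgt (emap f) = vmap (H.tgt f)

/-! ## Cycle graphs and non-crossing partitions -/

/-- The cycle graph of length `n`: vertices `Fin n`, edges `Fin n`, edge `i` joining
`v i` and `v (i+1)` (indices mod `n`). -/
def cycleGraph (n : ℕ) [NeZero n] : Multigraph (Fin n) (Fin n) :=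
  ⟨fun i => s(i, i + 1)⟩

/-- The cycle graph of length `n` in which each edge carries an orientation:
edge `i` is oriented counterclockwise (from `v i` to `v (i+1)`) if `orient i = true`,
and clockwise otherwise. -/
def cycleDigraph (n : ℕ) [NeZero n] (orient : Fin n → Bool) : Multidigraph (Fin n) (Fin n) where
  src := fun i => if orient i then i else i + 1
  tgt := fun i => if orient i then i + 1 else i

/-- A relation (e.g. a partition) on `Fin m` is non-crossing if there are no indices
`i₁ < i₂ < i₃ < i₄` with `i₁, i₃` in one block and `i₂, i₄` in a different block. -/
def NonCrossingRel {m : ℕ} (r : Fin m → Fin m → Prop) : Prop :=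
  ¬ ∃ i₁ i₂ i₃ i₄ : Fin m, i₁ < i₂ ∧ i₂ < i₃ ∧ i₃ < i₄ ∧ r i₁ i₃ ∧ r i₂ i₄ ∧ ¬ r i₁ i₂

/-- The union of a partition `σ` of the vertices `v₁, …, vₙ` (at the even positions) and
a partition `κ` of the edges `e₁, …, eₙ` (at the odd positions) of a cycle, as a relation
on the `2n` interlaced points `v₁, e₁, v₂, e₂, …, vₙ, eₙ`. -/
def interRel {n : ℕ} (σ κ : Setoid (Fin n)) (x y : Fin (2 * n)) : Prop :=
  (x.val % 2 = 0 ∧ y.val % 2 = 0 ∧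
    σ.r ⟨x.val / 2, by have := x.isLt; omega⟩ ⟨y.val / 2, by have := y.isLt; omega⟩) ∨
  (x.val % 2 = 1 ∧ y.val % 2 = 1 ∧
    κ.r ⟨x.val / 2, by have := x.isLt; omega⟩ ⟨y.val / 2, by have := y.isLt; omega⟩)

/-- `κ` is the Kreweras complement of `σ`: the largest partition of the edges such that
the union `σ ∪ κ` is non-crossing with respect to the interlaced (cyclic) order. -/
def IsKrewerasComplement {n : ℕ} (σ κ : Setoid (Fin n)) : Prop :=
  NonCrossingRel (interRel σ κ) ∧
    ∀ κ' : Setoid (Fin n), NonCrossingRel (interRel σ κ') → κ' ≤ κ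

open Classical in
/-- The block of the partition `κ` containing `i`, as a finite set. -/
noncomputable def setoidClass {n : ℕ} (κ : Setoid (Fin n)) (i : Fin n) : Finset (Fin n) :=
  Finset.univ.filter fun j => κ.r i j

open Fin.NatCast in
/-- `j` is the next element of `B` encountered strictly after `i` in the cyclic order of
`Fin n` (if `B = {i}` then `j = i` itself, one full turn later). -/
def CyclicNextIn {n : ℕ} [NeZero n] (B : Finset (Fin n)) (i j : Fin n) : Prop :=
  i ∈ B ∧ j ∈ B ∧ ∃ d : ℕ, 0 < d ∧ d ≤ n ∧ j = i + (d : Fin n) ∧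
    ∀ d' : ℕ, 0 < d' → d' < d → i + (d' : Fin n) ∉ B

/-! ## Wedges of two (di)graphs at their roots -/

/-- The canonical map from the vertices of `t'` into the wedge vertex type
`V ⊕ {x : V' // x ≠ ρ'}`, sending the root `ρ'` to (the image of) `ρ`. -/
def wedgeJ {V V' : Type} [DecidableEq V'] (ρ : V) (ρ' : V') :
    V' → V ⊕ {x : V' // x ≠ ρ'} :=
  fun x => if h : x = ρ' then Sum.inl ρ else Sum.inr ⟨x, h⟩

/-- The wedge of two multigraphs `t`, `t'` obtained by identifying `ρ ∈ t` with `ρ' ∈ t'`. -/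
def Multigraph.wedge {V E V' E' : Type} [DecidableEq V']
    (t : Multigraph V E) (t' : Multigraph V' E') (ρ : V) (ρ' : V') :
    Multigraph (V ⊕ {x : V' // x ≠ ρ'}) (E ⊕ E') :=
  ⟨fun e =>
    match e with
    | Sum.inl e => (t.ends e).map Sum.inl
    | Sum.inr e => (t'.ends e).map (wedgeJ ρ ρ')⟩

/-- The wedge of two multidigraphs `t`, `t'` obtained by identifying `ρ ∈ t` with `ρ' ∈ t'`. -/
def Multidigraph.wedge {V E V' E' : Type} [DecidableEq V']
    (t : Multidigraph V E) (t' : Multidigraph V' E') (ρ : V) (ρ' : V') :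
    Multidigraph (V ⊕ {x : V' // x ≠ ρ'}) (E ⊕ E') where
  src := fun e =>
    match e with
    | Sum.inl e => Sum.inl (t.src e)
    | Sum.inr e => wedgeJ ρ ρ' (t'.src e)
  tgt := fun e =>
    match e with
    | Sum.inl e => Sum.inl (t.tgt e)
    | Sum.inr e => wedgeJ ρ ρ' (t'.tgt e)

/-! ## Flowers (a cycle with graphs attached) and stars (trees wedged at a common root) -/

/-- The canonical map from the vertices of the `i`-th attached graph into the flower,
sending the basepoint `b i` to the cycle vertex `i`. -/
def flowerJ {n : ℕ} {W : Fin n → Type} [∀ i, DecidableEq (W i)]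
    (b : ∀ i, W i) (i : Fin n) :
    W i → Fin n ⊕ (Σ i, {x : W i // x ≠ b i}) :=
  fun x => if h : x = b i then Sum.inl i else Sum.inr ⟨i, x, h⟩

/-- The flower: a cycle of length `n` with the multigraph `d i` attached at the cycle
vertex `i` via its basepoint `b i`; the attached graphs are disjoint except through the
cycle, and `d i` meets the cycle exactly in the vertex `i`. -/
def flowerGraph {n : ℕ} [NeZero n] {W F : Fin n → Type} [∀ i, DecidableEq (W i)]
    (d : ∀ i, Multigraph (W i) (F i)) (b : ∀ i, W i) :
    Multigraph (Fin n ⊕ (Σ i, {x : W i // x ≠ b i})) (Fin n ⊕ (Σ i, F i)) :=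
  ⟨fun e =>
    match e with
    | Sum.inl k => s(Sum.inl k, Sum.inl (k + 1))
    | Sum.inr ⟨i, f⟩ => ((d i).ends f).map (flowerJ b i)⟩

/-- The canonical map from the vertices of the `i`-th tree into the star, sending the
root `r i` to the common amalgamated root. -/
def starJ {n : ℕ} {W : Fin n → Type} [∀ i, DecidableEq (W i)]
    (r : ∀ i, W i) (i : Fin n) :
    W i → Unit ⊕ (Σ i, {x : W i // x ≠ r i}) :=
  fun x => if h : x = r i then Sum.inl () else Sum.inr ⟨i, x, h⟩

/-- The star: the disjoint union of the multigraphs `t i` with all the roots `r i`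
identified to a single vertex. -/
def starGraph {n : ℕ} {W F : Fin n → Type} [∀ i, DecidableEq (W i)]
    (t : ∀ i, Multigraph (W i) (F i)) (r : ∀ i, W i) :
    Multigraph (Unit ⊕ (Σ i, {x : W i // x ≠ r i})) (Σ i, F i) :=
  ⟨fun e => ((t e.1).ends e.2).map (starJ r e.1)⟩

/-! ## Graphs of matrices -/

/-- The partition of `V` identifying the input `vin` with the output `vout` (and nothing
else). -/
def rootSetoid {V : Type} (vin vout : V) : Setoid V where
  r a b := a = b ∨ ((a = vin ∨ a = vout) ∧ (b = vin ∨ b = vout))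
  iseqv := by
    constructor
    · intro x; exact Or.inl rfl
    · rintro x y (rfl | ⟨hx, hy⟩)
      · exact Or.inl rfl
      · exact Or.inr ⟨hy, hx⟩
    · rintro x y z (rfl | ⟨hx, hy⟩) (rfl | ⟨hy', hz⟩)
      · exact Or.inl rfl
      · exact Or.inr ⟨hy', hz⟩
      · exact Or.inr ⟨hx, hy⟩
      · exact Or.inr ⟨hx, hz⟩

/-- The graph of matrices `Z_g(A₁, …, A_K)` associated to a bi-rooted multidigraph `g`
with input `vin`, output `vout` and edge ordering `o`. -/
noncomputable def graphOfMatrices {V E : Type} [Fintype V] [Fintype E] [DecidableEq V] {K N : ℕ}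
    (g : Multidigraph V E) (vin vout : V) (o : E ≃ Fin K)
    (A : Fin K → Matrix (Fin N) (Fin N) ℂ) : Matrix (Fin N) (Fin N) ℂ :=
  Matrix.of fun i j =>
    ∑ φ : V → Fin N,
      if φ vout = i ∧ φ vin = j then ∏ e : E, A (o e) (φ (g.tgt e)) (φ (g.src e)) else 0

/-! ## Set partitions as finite set systems -/

/-- `P` is a partition of the (finite) type `V`: its blocks are nonempty and every
element of `V` lies in exactly one block. -/
def IsPartitionOf (V : Type) [DecidableEq V] (P : Finset (Finset V)) : Prop :=
  (∀ B ∈ P, B.Nonempty) ∧ ∀ v : V, ∃! B, B ∈ P ∧ v ∈ B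

/-- The block of the partition `P` containing `v`. -/
def blockOf {V : Type} [DecidableEq V] (P : Finset (Finset V)) (hP : IsPartitionOf V P)
    (v : V) : {B : Finset V // B ∈ P} :=
  ⟨Finset.choose (fun B => v ∈ B) P (hP.2 v),
    Finset.choose_mem (fun B => v ∈ B) P (hP.2 v)⟩


/-!
Solidity makes `v ↦ [v]` a bijection from the vertices of `t` onto the blocks of `π`, so the
quotient has `n = |V|` vertices and `|E| + |E'| = 2 (n - 1)` edges. In any multigraph,
deleting one edge from every simple cycle leaves a forest, so `#edges + 1 ≤ n + #cycles`;
in a cactus the cycles partition the edges, and without loops each has at least two of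
them. These bounds force every pad of the oriented cactus to be a directed digon. Neither
tree contains a digon, so the partner of an edge `v → w` of `t` is an edge of `t'`, and it
runs from `f_π(w)` to `f_π(v)`.
-/

theorem Finset.exists_card_le_forall_inter_nonempty {α : Type} [DecidableEq α]
    (C : Finset (Finset α)) :
    ∃ R : Finset α, R.card ≤ C.card ∧ ∀ S ∈ C, S.Nonempty → (S ∩ R).Nonempty := by
  induction C using Finset.induction_on with
  | empty => exact ⟨∅, by simp, by simp⟩
  | @insert S C hS ih =>
    obtain ⟨R, hRC, hR⟩ := ih
    rw [Finset.card_insert_of_notMem hS]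
    simp only [Finset.mem_insert, forall_eq_or_imp]
    by_cases hne : S.Nonempty
    · refine ⟨insert hne.choose R, (Finset.card_insert_le _ _).trans (by omega),
        fun _ => ⟨hne.choose, by simp [hne.choose_spec]⟩, fun T hT hT' => ?_⟩
      exact (hR T hT hT').mono (Finset.inter_subset_inter_left (Finset.subset_insert _ _))
    · exact ⟨R, by omega, fun h => absurd h hne, hR⟩

namespace Multigraph

variable {V E : Type} {G : Multigraph V E}

theorem isSimpleCycleOn_singleton [DecidableEq E] {e : E} {a : V} (he : G.ends e = s(a, a)) :
    G.IsSimpleCycleOn {e} :=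
  ⟨a, .cons e he (.nil a), by simp [Walk.edges], by simp [Walk.edges], by simp [Walk.verts],
    by simp [Walk.edges]⟩

theorem isSimpleCycleOn_pair [DecidableEq E] {e₁ e₂ : E} {a b : V} (hne : e₁ ≠ e₂)
    (hab : a ≠ b) (h₁ : G.ends e₁ = s(a, b)) (h₂ : G.ends e₂ = s(b, a)) :
    G.IsSimpleCycleOn {e₁, e₂} :=
  ⟨a, .cons e₁ h₁ (.cons e₂ h₂ (.nil a)), by simp [Walk.edges], by simp [Walk.edges, hne],
    by simp [Walk.verts, hab], by simp [Walk.edges]⟩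

theorem IsSimpleCycleOn.nonempty [DecidableEq E] {S : Finset E} (hS : G.IsSimpleCycleOn S) :
    S.Nonempty := by
  obtain ⟨v, p, hne, -, -, rfl⟩ := hS
  simpa [List.toFinset_nonempty_iff] using hne

namespace Walk

theorem start_mem_verts {u v : V} (p : G.Walk u v) : u ∈ p.verts := by
  cases p <;> simp [verts]

theorem eq_of_edges_eq_nil {u v : V} (p : G.Walk u v) (hp : p.edges = []) : u = v := by
  cases p with
  | nil => rfl
  | cons => simp [edges] at hp

theorem mem_verts_of_mem_edges {u v : V} (p : G.Walk u v) {e : E} (he : e ∈ p.edges) {a : V}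
    (ha : a ∈ G.ends e) : a ∈ p.verts := by
  induction p with
  | nil => simp [edges] at he
  | @cons u x v f hf p ih =>
    simp only [edges, List.mem_cons] at he
    rcases he with rfl | he
    · rw [hf, Sym2.mem_iff] at ha
      rcases ha with rfl | rfl
      · simp [verts]
      · simp [verts, start_mem_verts]
    · simp [verts, ih he]

theorem IsPath.edges_nodup {u v : V} {p : G.Walk u v} (hp : p.IsPath) : p.edges.Nodup := by
  induction p with
  | nil => simp [edges]
  | cons e he p ih =>
    simp only [IsPath, verts, List.nodup_cons] at hp
    simp only [edges, List.nodup_cons]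
    exact ⟨fun hmem => hp.1 (p.mem_verts_of_mem_edges hmem (he ▸ Sym2.mem_mk_left _ _)),
      ih hp.2⟩

def snoc {u v w : V} (p : G.Walk u v) (e : E) (he : G.ends e = s(v, w)) : G.Walk u w :=
  match p with
  | .nil _ => .cons e he (.nil w)
  | .cons f hf p => .cons f hf (p.snoc e he)

@[simp]
theorem edges_snoc {u v w : V} (p : G.Walk u v) (e : E) (he : G.ends e = s(v, w)) :
    (p.snoc e he).edges = p.edges ++ [e] := by
  induction p <;> simp_all [snoc, edges]

@[simp]
theorem verts_snoc {u v w : V} (p : G.Walk u v) (e : E) (he : G.ends e = s(v, w)) :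
    (p.snoc e he).verts = p.verts ++ [w] := by
  induction p <;> simp_all [snoc, verts]

theorem exists_prefix {u v w : V} (p : G.Walk u v) (hw : w ∈ p.verts) :
    ∃ q : G.Walk u w, q.verts.Sublist p.verts ∧ q.edges.Sublist p.edges := by
  induction p with
  | nil v =>
    obtain rfl : w = v := by simpa [verts] using hw
    exact ⟨.nil w, .refl _, .refl _⟩
  | @cons u x v e he p ih =>
    by_cases hu : w = u
    · subst hu
      exact ⟨.nil w, by simp [verts], by simp [edges]⟩
    · obtain ⟨q, hqv, hqe⟩ := ih (by simpa [verts, hu] using hw)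
      exact ⟨.cons e he q, hqv.cons_cons u, hqe.cons_cons e⟩

theorem IsPath.isSimpleCycleOn_snoc [DecidableEq E] {u v : V} {p : G.Walk u v} (hp : p.IsPath)
    {e : E} (he : G.ends e = s(v, u)) (hep : e ∉ p.edges) :
    G.IsSimpleCycleOn (p.snoc e he).edges.toFinset :=
  ⟨u, p.snoc e he, by simp,
    by simpa [List.nodup_append] using ⟨hp.edges_nodup, fun _ h he => hep (he ▸ h)⟩,
    by rw [verts_snoc, List.dropLast_concat]; exact hp, rfl⟩

end Walk

namespace ReachAvoid

variable {F F' : Set E} {u v w : V}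

theorem trans (h₁ : G.ReachAvoid F u v) (h₂ : G.ReachAvoid F v w) : G.ReachAvoid F u w := by
  induction h₂ with
  | refl => exact h₁
  | tail e he hvw _ ih => exact .tail e he hvw ih

theorem single {e : E} (he : e ∉ F) (h : G.ends e = s(u, v)) : G.ReachAvoid F u v :=
  .tail e he h (.refl u)

theorem symm (h : G.ReachAvoid F u v) : G.ReachAvoid F v u := by
  induction h with
  | refl => exact .refl _
  | tail e he hvw _ ih => exact (single he (hvw.trans Sym2.eq_swap)).trans ih

theorem mono (hF : F' ⊆ F) (h : G.ReachAvoid F u v) : G.ReachAvoid F' u v := by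
  induction h with
  | refl => exact .refl _
  | tail e he hvw _ ih => exact .tail e (fun h => he (hF h)) hvw ih

theorem exists_isPath (h : G.ReachAvoid F u v) :
    ∃ p : G.Walk u v, p.IsPath ∧ ∀ e ∈ p.edges, e ∉ F := by
  classical
  induction h with
  | refl => exact ⟨.nil _, by simp [Walk.IsPath, Walk.verts], by simp [Walk.edges]⟩
  | @tail v w e he hvw _ ih =>
    obtain ⟨p, hp, hpF⟩ := ih
    by_cases hw : w ∈ p.verts
    · obtain ⟨q, hqv, hqe⟩ := p.exists_prefix hw
      exact ⟨q, hqv.nodup hp, fun e' he' => hpF e' (hqe.mem he')⟩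
    · refine ⟨p.snoc e hvw, ?_, ?_⟩
      · simpa [Walk.IsPath, List.nodup_append] using ⟨hp, fun a ha h => hw (h ▸ ha)⟩
      · simpa [or_imp, forall_and] using ⟨hpF, he⟩

end ReachAvoid

def reachAvoidSetoid (G : Multigraph V E) (F : Set E) : Setoid V :=
  ⟨G.ReachAvoid F, ⟨.refl, .symm, .trans⟩⟩

noncomputable def numComponents (G : Multigraph V E) (A : Finset E) : ℕ :=
  Nat.card (Quotient (G.reachAvoidSetoid (↑A)ᶜ))

theorem ReachAvoid.of_insert [DecidableEq E] {A : Finset E} {e : E} {a b u v : V}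
    (hab : G.ends e = s(a, b)) (h : G.ReachAvoid (↑(insert e A))ᶜ u v) :
    G.ReachAvoid (↑A)ᶜ u v ∨ (G.ReachAvoid (↑A)ᶜ u a ∧ G.ReachAvoid (↑A)ᶜ b v) ∨
      (G.ReachAvoid (↑A)ᶜ u b ∧ G.ReachAvoid (↑A)ᶜ a v) := by
  induction h with
  | refl => exact .inl (.refl _)
  | @tail v w f hf hvw _ ih =>
    simp only [Finset.coe_insert, Set.mem_compl_iff, Set.mem_insert_iff, Finset.mem_coe,
      not_or, not_and, not_not] at hf
    by_cases hfe : f = e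
    · subst hfe
      rcases Sym2.eq_iff.mp (hab.symm.trans hvw) with ⟨rfl, rfl⟩ | ⟨rfl, rfl⟩
      · rcases ih with h | ⟨h, -⟩ | ⟨h, -⟩
        · exact .inr (.inl ⟨h, .refl _⟩)
        · exact .inr (.inl ⟨h, .refl _⟩)
        · exact .inl h
      · rcases ih with h | ⟨h, -⟩ | ⟨h, -⟩
        · exact .inr (.inr ⟨h, .refl _⟩)
        · exact .inl h
        · exact .inr (.inr ⟨h, .refl _⟩)
    · have hfA : f ∉ (↑A : Set E)ᶜ := by simpa using hf hfe
      rcases ih with h | ⟨h₁, h₂⟩ | ⟨h₁, h₂⟩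
      · exact .inl (.tail f hfA hvw h)
      · exact .inr (.inl ⟨h₁, .tail f hfA hvw h₂⟩)
      · exact .inr (.inr ⟨h₁, .tail f hfA hvw h₂⟩)

theorem numComponents_empty [Finite V] : G.numComponents ∅ = Nat.card V := by
  refine (Nat.card_eq_of_bijective _ ⟨fun u v huv => ?_, Quotient.mk_surjective⟩).symm
  have h : G.ReachAvoid (↑(∅ : Finset E))ᶜ u v := Quotient.exact huv
  cases h with
  | refl => rfl
  | tail _ he => simp at he

theorem numComponents_pos [Finite V] [Nonempty V] (A : Finset E) : 0 < G.numComponents A :=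
  have : Nonempty (Quotient (G.reachAvoidSetoid (↑A)ᶜ)) := .map Quotient.mk'' ‹_›
  Nat.card_pos

theorem numComponents_univ_le_one [Finite V] [Fintype E] (hG : G.Connected) :
    G.numComponents Finset.univ ≤ 1 :=
  Finite.card_le_one_iff_subsingleton.mpr
    ⟨Quotient.ind₂ fun u v => Quotient.sound ((hG u v).mono (by simp))⟩

section Insert

variable [Finite V] [DecidableEq E] (A : Finset E) {e : E}

theorem numComponents_le_numComponents_insert_add_one :
    G.numComponents A ≤ G.numComponents (insert e A) + 1 := by
  classical
  obtain ⟨⟨a, b⟩, hab⟩ := Quot.exists_rep (G.ends e)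
  set s := G.reachAvoidSetoid (↑A)ᶜ
  let φ : Quotient s → Quotient (G.reachAvoidSetoid (↑(insert e A))ᶜ) :=
    Quotient.map id fun _ _ => ReachAvoid.mono (Set.compl_subset_compl_of_subset (by simp))
  -- away from the class of `a`, merging along `e` identifies nothing
  let ψ : Quotient s → Option _ := fun x => if x = ⟦a⟧ then none else some (φ x)
  have hψ : Function.Injective ψ := by
    refine Quotient.ind₂ fun x y hxy => ?_
    by_cases hx : (⟦x⟧ : Quotient s) = ⟦a⟧ <;>
      by_cases hy : (⟦y⟧ : Quotient s) = ⟦a⟧ <;>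
      simp only [ψ, hx, hy, if_true, if_false, reduceCtorEq, Option.some.injEq] at hxy
    · exact hx.trans hy.symm
    rcases ReachAvoid.of_insert hab.symm (Quotient.exact hxy) with h | ⟨h, -⟩ | ⟨-, h⟩
    · exact Quotient.sound h
    · exact absurd (Quotient.sound h) hx
    · exact absurd (Quotient.sound h.symm) hy
  simpa [numComponents, Finite.card_option] using Nat.card_le_card_of_injective ψ hψ

theorem numComponents_insert_lt {a b : V} (hab : G.ends e = s(a, b))
    (hnot : ¬ G.ReachAvoid (↑A)ᶜ a b) : G.numComponents (insert e A) < G.numComponents A := by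
  let φ : Quotient (G.reachAvoidSetoid (↑A)ᶜ) →
      Quotient (G.reachAvoidSetoid (↑(insert e A))ᶜ) :=
    Quotient.map id fun _ _ => ReachAvoid.mono (Set.compl_subset_compl_of_subset (by simp))
  have hφ : Function.Surjective φ := Quotient.ind fun x => ⟨⟦x⟧, rfl⟩
  have hφab : φ ⟦a⟧ = φ ⟦b⟧ := Quotient.sound (ReachAvoid.single (by simp) hab)
  refine lt_of_le_of_ne (Nat.card_le_card_of_surjective φ hφ) fun hcard => hnot ?_
  have hφinj := ((Nat.bijective_iff_surjective_and_card φ).mpr ⟨hφ, hcard.symm⟩).1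
  exact Quotient.exact (hφinj hφab)

end Insert

theorem card_le_card_add_numComponents [Finite V] [DecidableEq E] (A : Finset E) :
    Nat.card V ≤ A.card + G.numComponents A := by
  induction A using Finset.induction_on with
  | empty => simp [numComponents_empty]
  | @insert e A he ih =>
    have := numComponents_le_numComponents_insert_add_one (G := G) A (e := e)
    rw [Finset.card_insert_of_notMem he]
    omega

theorem card_add_numComponents_le [Finite V] [DecidableEq E] (A : Finset E)
    (hA : ∀ S ⊆ A, ¬ G.IsSimpleCycleOn S) : A.card + G.numComponents A ≤ Nat.card V := by
  induction A using Finset.induction_on with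
  | empty => simp [numComponents_empty]
  | @insert e A he ih =>
    obtain ⟨⟨a, b⟩, hab⟩ := Quot.exists_rep (G.ends e)
    -- a path from `b` to `a` inside `A` would close up with `e` to a simple cycle
    have hnot : ¬ G.ReachAvoid (↑A)ᶜ b a := fun h => by
      obtain ⟨p, hp, hpA⟩ := h.exists_isPath
      have hpA' : ∀ x ∈ p.edges, x ∈ A := fun x hx => by simpa using hpA x hx
      refine hA _ ?_ (hp.isSimpleCycleOn_snoc hab.symm fun h => he (hpA' e h))
      intro x hx
      simp only [Walk.edges_snoc, List.toFinset_append, Finset.mem_union, List.mem_toFinset,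
        List.toFinset_cons, List.toFinset_nil, insert_empty_eq, Finset.mem_singleton] at hx
      rcases hx with hx | rfl
      · exact Finset.mem_insert_of_mem (hpA' x hx)
      · exact Finset.mem_insert_self x A
    have := numComponents_insert_lt A (hab.symm.trans Sym2.eq_swap) hnot
    have := ih fun S hS => hA S (hS.trans (Finset.subset_insert e A))
    rw [Finset.card_insert_of_notMem he]
    omega

theorem Connected.card_le_card_add_one [Finite V] [Fintype E] (hG : G.Connected) :
    Nat.card V ≤ Fintype.card E + 1 := by
  classical
  have := card_le_card_add_numComponents (G := G) Finset.univ
  have := numComponents_univ_le_one hG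
  rw [Finset.card_univ] at *
  omega

theorem IsSimpleCycleOn.two_le_card [DecidableEq E] {S : Finset E} (hS : G.IsSimpleCycleOn S)
    (hloop : ∀ (e : E) (a : V), G.ends e ≠ s(a, a)) : 2 ≤ S.card := by
  obtain ⟨v, p, hne, hnd, -, rfl⟩ := hS
  rw [List.toFinset_card_of_nodup hnd]
  cases p with
  | nil => simp [Walk.edges] at hne
  | cons e he q =>
    by_cases hq : q.edges = []
    · obtain rfl := q.eq_of_edges_eq_nil hq
      exact absurd he (hloop e _)
    · simpa [Walk.edges, Nat.succ_le_iff, List.length_pos_iff] using hq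

/-- Removing one edge from every simple cycle leaves a forest, which has at least one
component. -/
theorem card_add_one_le_card_add_card_of_isSimpleCycleOn_mem [Finite V] [Nonempty V]
    [Fintype E] [DecidableEq E] (C : Finset (Finset E))
    (hC : ∀ S, G.IsSimpleCycleOn S → S ∈ C) : Fintype.card E + 1 ≤ Nat.card V + C.card := by
  obtain ⟨R, hRC, hR⟩ := C.exists_card_le_forall_inter_nonempty
  have hfree : ∀ S ⊆ Finset.univ \ R, ¬ G.IsSimpleCycleOn S := fun S hS hcyc => by
    obtain ⟨x, hx⟩ := hR S (hC S hcyc) hcyc.nonempty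
    obtain ⟨hxS, hxR⟩ := Finset.mem_inter.mp hx
    exact (Finset.mem_sdiff.mp (hS hxS)).2 hxR
  have := card_add_numComponents_le _ hfree
  have := numComponents_pos (G := G) (Finset.univ \ R)
  have := Finset.card_le_card_sdiff_add_card (s := Finset.univ) (t := R)
  rw [Finset.card_univ] at this
  omega

theorem IsSimpleCycleOn.card_eq_two [Finite V] [Nonempty V] [Fintype E] [DecidableEq E]
    (hloop : ∀ (e : E) (a : V), G.ends e ≠ s(a, a))
    (huniq : ∀ e, ∃! S : Finset E, G.IsSimpleCycleOn S ∧ e ∈ S)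
    (hcard : 2 * Nat.card V ≤ Fintype.card E + 2) {S : Finset E} (hS : G.IsSimpleCycleOn S) :
    S.card = 2 := by
  classical
  set C := Finset.univ.filter G.IsSimpleCycleOn
  have hcount := card_add_one_le_card_add_card_of_isSimpleCycleOn_mem (G := G) C (by simp [C])
  have hsum : ∑ T ∈ C, T.card = Fintype.card E := by
    rw [Finset.sum_card (n := 1) fun e => ?_, mul_one]
    obtain ⟨T, hT, hT'⟩ := huniq e
    rw [Finset.card_eq_one]
    exact ⟨T, by ext U; simpa [C] using ⟨fun hU => hT' U hU, by rintro rfl; exact hT⟩⟩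
  have hle : ∀ T ∈ C, 2 ≤ T.card := fun T hT => (Finset.mem_filter.mp hT).2.two_le_card hloop
  have heq := (Finset.sum_eq_sum_iff_of_le hle).mp <| by
    have := Finset.sum_le_sum hle
    simp only [Finset.sum_const, smul_eq_mul] at this ⊢
    omega
  exact (heq S (by simpa [C] using hS)).symm

end Multigraph

namespace Multidigraph

variable {V E : Type} {D : Multidigraph V E}

theorem DiWalk.eq_of_edges_eq_nil {u v : V} (p : D.DiWalk u v) (hp : p.edges = []) : u = v := by
  cases p with
  | nil => rfl
  | cons => simp [edges] at hp

theorem IsDiCycleOn.exists_antiparallel [DecidableEq E] {S : Finset E} (hS : D.IsDiCycleOn S)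
    (hcard : S.card = 2) {x : E} (hx : x ∈ S) :
    ∃ y, y ≠ x ∧ D.src y = D.tgt x ∧ D.tgt y = D.src x := by
  obtain ⟨v, p, -, hnd, -, rfl⟩ := hS
  rw [List.toFinset_card_of_nodup hnd] at hcard
  rcases p with _ | ⟨a, hsa, hta, _ | ⟨b, hsb, htb, r⟩⟩
  · simp [DiWalk.edges] at hcard
  · simp [DiWalk.edges] at hcard
  · have hr : r.edges = [] := by simpa [DiWalk.edges] using hcard
    obtain rfl := r.eq_of_edges_eq_nil hr
    have hab : a ≠ b := by simpa [DiWalk.edges, hr] using hnd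
    simp only [DiWalk.edges, hr, List.toFinset_cons, List.toFinset_nil, insert_empty_eq,
      Finset.mem_insert, Finset.mem_singleton] at hx
    rcases hx with rfl | rfl
    · exact ⟨b, hab.symm, hsb.trans hta.symm, htb.trans hsa.symm⟩
    · exact ⟨a, hab, hsa.trans htb.symm, hta.trans hsb.symm⟩

theorem toMultigraph_ends_ne_of_src_ne_tgt (h : ∀ e, D.src e ≠ D.tgt e) (e : E) (a : V) :
    D.toMultigraph.ends e ≠ s(a, a) := fun he => by
  change s(D.src e, D.tgt e) = s(a, a) at he
  rcases Sym2.eq_iff.mp he with ⟨h₁, h₂⟩ | ⟨h₁, h₂⟩ <;>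
    exact h e (h₁.trans h₂.symm)

theorem src_ne_tgt_of_isTree [DecidableEq E] (hD : D.toMultigraph.IsTree) (e : E) :
    D.src e ≠ D.tgt e := fun h =>
  hD.2 {e} (Multigraph.isSimpleCycleOn_singleton (a := D.tgt e) (by simp [toMultigraph, h]))

theorem eq_of_antiparallel_of_isTree [DecidableEq E] (hD : D.toMultigraph.IsTree)
    {e₁ e₂ : E} (hs : D.src e₂ = D.tgt e₁) (ht : D.tgt e₂ = D.src e₁) :
    e₁ = e₂ := by
  by_contra hne
  exact hD.2 {e₁, e₂} (Multigraph.isSimpleCycleOn_pair hne (src_ne_tgt_of_isTree hD e₁) rfl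
    (by simp [toMultigraph, hs, ht]))

end Multidigraph

section WedgeQuotient

variable {V E V' E' : Type} [DecidableEq V'] {ρ : V} {ρ' : V'}

theorem wedgeJ_of_ne {x : V'} (hx : x ≠ ρ') : wedgeJ ρ ρ' x = Sum.inr ⟨x, hx⟩ := dif_neg hx

theorem card_quotient_eq_card_left {σ : Setoid (V ⊕ {x : V' // x ≠ ρ'})}
    (hsolid : ∀ a b : V, σ.r (Sum.inl a) (Sum.inl b) → a = b)
    (hcover : ∀ x : V', ∃ v : V, σ.r (Sum.inl v) (wedgeJ ρ ρ' x)) :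
    Nat.card (Quotient σ) = Nat.card V := by
  refine (Nat.card_eq_of_bijective (fun v => (⟦.inl v⟧ : Quotient σ))
    ⟨fun a b h => hsolid a b (Quotient.exact h), Quotient.ind ?_⟩).symm
  rintro (v | ⟨x, hx⟩)
  · exact ⟨v, rfl⟩
  · obtain ⟨v, hv⟩ := hcover x
    exact ⟨v, Quotient.sound (by rwa [wedgeJ_of_ne hx] at hv)⟩

end WedgeQuotient

theorem stmt_11_general {V E V' E' : Type} [Fintype V] [Fintype V'] [Fintype E] [Fintype E']
    [DecidableEq V'] [DecidableEq E] [DecidableEq E']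
    (t : Multidigraph V E) (t' : Multidigraph V' E') (ρ : V) (ρ' : V')
    (ht : t.toMultigraph.IsTree) (ht' : t'.toMultigraph.IsTree)
    (σ : Setoid (V ⊕ {x : V' // x ≠ ρ'}))
    (hsolid₁ : ∀ a b : V, σ.r (Sum.inl a) (Sum.inl b) → a = b)
    (hsolid₂ : ∀ a b : V', σ.r (wedgeJ ρ ρ' a) (wedgeJ ρ ρ' b) → a = b)
    (hcactus : ((t.wedge t' ρ ρ').quot σ).IsOrientedCactus)
    (f : V → V') (hfbij : Function.Bijective f)
    (hf : ∀ v : V, σ.r (Sum.inl v) (wedgeJ ρ ρ' (f v))) :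
    ∀ v w : V,
      (∃ e : E, t.src e = v ∧ t.tgt e = w) ↔
      (∃ e' : E', t'.src e' = f w ∧ t'.tgt e' = f v) := by
  set D := (t.wedge t' ρ ρ').quot σ
  have hι : Function.Injective fun v : V => (⟦.inl v⟧ : Quotient σ) :=
    fun a b h => hsolid₁ a b (Quotient.exact h)
  have hι' : Function.Injective fun v' : V' => (⟦wedgeJ ρ ρ' v'⟧ : Quotient σ) :=
    fun a b h => hsolid₂ a b (Quotient.exact h)
  have hfq (v : V) : (⟦.inl v⟧ : Quotient σ) = ⟦wedgeJ ρ ρ' (f v)⟧ :=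
    Quotient.sound (hf v)
  have hloop := D.toMultigraph_ends_ne_of_src_ne_tgt fun
    | .inl e, h => t.src_ne_tgt_of_isTree ht e (hι h)
    | .inr e', h => t'.src_ne_tgt_of_isTree ht' e' (hι' h)
  have hcard : 2 * Nat.card (Quotient σ) ≤ Fintype.card (E ⊕ E') + 2 := by
    have := card_quotient_eq_card_left hsolid₁ fun x =>
      (hfbij.2 x).imp fun v hv => hv ▸ hf v
    have := Nat.card_eq_of_bijective f hfbij
    have := ht.1.card_le_card_add_one
    have := ht'.1.card_le_card_add_one
    rw [Fintype.card_sum]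
    omega
  have : Nonempty (Quotient σ) := ⟨⟦.inl ρ⟧⟩
  have hpartner (x : E ⊕ E') : ∃ y, y ≠ x ∧ D.src y = D.tgt x ∧ D.tgt y = D.src x := by
    obtain ⟨S, hS, hxS⟩ := (hcactus.1.2 x).exists
    exact (hcactus.2 S hS).exists_antiparallel (hS.card_eq_two hloop hcactus.1.2 hcard) hxS
  intro v w
  constructor
  · rintro ⟨e, rfl, rfl⟩
    obtain ⟨y, hne, hsrc, htgt⟩ := hpartner (.inl e)
    rcases y with e₂ | e'
    · exact absurd (congrArg Sum.inl (t.eq_of_antiparallel_of_isTree ht (hι hsrc) (hι htgt)))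
        hne.symm
    · exact ⟨e', hι' (hsrc.trans (hfq _)), hι' (htgt.trans (hfq _))⟩
  · rintro ⟨e', hfw, hfv⟩
    obtain ⟨y, hne, hsrc, htgt⟩ := hpartner (.inr e')
    rcases y with e | e₂
    · exact ⟨e, hι (hsrc.trans (hfv ▸ hfq v).symm), hι (htgt.trans (hfw ▸ hfq w).symm)⟩
    · exact absurd (congrArg Sum.inr
        (t'.eq_of_antiparallel_of_isTree ht' (hι' hsrc) (hι' htgt))) hne.symm

/-- In the setting of Statement 10, the induced bijection `f_π` from
the vertices of `t` to the vertices of `t'` (sending `ρ` to `ρ'`) reverses adjacency: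
there is an edge directed from `v` to `w` in `t` iff there is an edge directed from
`f_π(w)` to `f_π(v)` in `t'`.  In particular `f_π` is an anti-isomorphism of rooted
directed trees. -/
theorem stmt_11 {V E V' E' : Type} [Fintype V] [Fintype V'] [Fintype E] [Fintype E']
    [DecidableEq V] [DecidableEq V'] [DecidableEq E] [DecidableEq E']
    (t : Multidigraph V E) (t' : Multidigraph V' E') (ρ : V) (ρ' : V')
    (ht : t.toMultigraph.IsTree) (ht' : t'.toMultigraph.IsTree)
    (hV : 1 < Fintype.card V) (hV' : 1 < Fintype.card V')
    (hρ : t.toMultigraph.degree ρ = 1) (hρ' : t'.toMultigraph.degree ρ' = 1)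
    (hdeg : ∀ v : V, ¬ (t.indeg v = 1 ∧ t.outdeg v = 1))
    (hdeg' : ∀ v' : V', ¬ (t'.indeg v' = 1 ∧ t'.outdeg v' = 1))
    (σ : Setoid (V ⊕ {x : V' // x ≠ ρ'}))
    (hsolid₁ : ∀ a b : V, σ.r (Sum.inl a) (Sum.inl b) → a = b)
    (hsolid₂ : ∀ a b : V', σ.r (wedgeJ ρ ρ' a) (wedgeJ ρ ρ' b) → a = b)
    (hcactus : ((t.wedge t' ρ ρ').quot σ).IsOrientedCactus)
    (f : V → V') (hfbij : Function.Bijective f)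
    (hf : ∀ v : V, σ.r (Sum.inl v) (wedgeJ ρ ρ' (f v))) :
    ∀ v w : V,
      (∃ e : E, t.src e = v ∧ t.tgt e = w) ↔
      (∃ e' : E', t'.src e' = f w ∧ t'.tgt e' = f v) :=
  stmt_11_general t t' ρ ρ' ht ht' σ hsolid₁ hsolid₂ hcactus f hfbij hf
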